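/- arXiv:1704.00944 — 2 statements merged into one kernel-verified Lean document; each statement's English description precedes it below -/
import Mathlib

section
/- Let q : ℝ → ℝ be a C² 2π-periodic function whose Fourier coefficients aₙ, bₙ vanish for all even n ≥ 2 (i.e. q(φ) + q(φ+π) is constant). Then W_{q'} ≥ 9 W_q + (9/(2π))(∫₀^{2π} q dφ)². -/
/-!
Write `cₙ` for the complex Fourier coefficients of `q` on `[0, 2π]`. Parseval's identity together
with `cₙ(g') = i n cₙ(g)` for periodic `g` gives
`W_{q'} - 9 W_q = 2π ∑ₙ (n² - 1)(n² - 9) |cₙ|²`.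
The term `n = 0` is `9 |c₀|² = 9 (∫ q)² / (2π)²`. For even `n ≠ 0` the coefficient `cₙ` vanishes,
and for odd `n` either `n² = 1` or `n² ≥ 9`, so all other terms are nonnegative.
-/

open Real intervalIntegral Complex MeasureTheory Set

open scoped Interval ComplexConjugate

theorem fourierCoeffOn_of_hasDerivAt_of_eq {a b : ℝ} (hab : a < b) {f f' : ℝ → ℂ}
    (hf : ∀ x ∈ [[a, b]], HasDerivAt f (f' x) x) (hf' : IntervalIntegrable f' volume a b)
    (hfab : f b = f a) (n : ℤ) :
    fourierCoeffOn hab f' n = 2 * π * I * n / (b - a) * fourierCoeffOn hab f n := by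
  rcases eq_or_ne n 0 with rfl | hn
  · simp [fourierCoeffOn_eq_integral _ _ hab, integral_eq_sub_of_hasDerivAt hf hf', hfab]
  · have hba : (b : ℂ) - a ≠ 0 := by exact_mod_cast (sub_pos.mpr hab).ne'
    rw [fourierCoeffOn_of_hasDerivAt hab hn hf hf', hfab, sub_self, mul_zero, zero_sub]
    field_simp

theorem fourierCoeffOn_neg_ofReal {a b : ℝ} (hab : a < b) (g : ℝ → ℝ) (n : ℤ) :
    fourierCoeffOn hab (fun x => (g x : ℂ)) (-n) =
      conj (fourierCoeffOn hab (fun x => (g x : ℂ)) n) := by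
  simp only [fourierCoeffOn_eq_integral _ _ hab, real_smul, smul_eq_mul, map_mul,
    ← intervalIntegral_conj, conj_ofReal, fourier_neg, conj_conj, neg_neg]

theorem hasSum_sq_fourierCoeffOn_ofReal {a b : ℝ} (hab : a < b) {g : ℝ → ℝ}
    (hg : Continuous g) :
    HasSum (fun n => ‖fourierCoeffOn hab (fun x => (g x : ℂ)) n‖ ^ 2)
      ((b - a)⁻¹ * ∫ x in a..b, g x ^ 2) := by
  have hc : Continuous fun x => (g x : ℂ) := continuous_ofReal.comp hg
  have hL2 : MemLp (fun x => (g x : ℂ)) 2 (volume.restrict (Ioc a b)) :=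
    (memLp_two_iff_integrable_sq_norm hc.aestronglyMeasurable).2
      ((hc.norm.pow 2).integrableOn_Ioc)
  simpa [sq_abs] using hasSum_sq_fourierCoeffOn hab hL2

theorem Function.Periodic.deriv {𝕜 F : Type*} [NontriviallyNormedField 𝕜] [NormedAddCommGroup F]
    [NormedSpace 𝕜 F] {f : 𝕜 → F} {c : 𝕜} (h : Function.Periodic f c) :
    Function.Periodic (deriv f) c := fun x => by
  rw [← deriv_comp_add_const, show (fun y => f (y + c)) = f from funext h]

noncomputable def fourierCoeffTwoPi (g : ℝ → ℝ) (n : ℤ) : ℂ :=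
  fourierCoeffOn two_pi_pos (fun x => (g x : ℂ)) n

theorem fourierCoeffTwoPi_natCast {g : ℝ → ℝ} (hg : IntervalIntegrable g volume 0 (2 * π))
    (n : ℕ) :
    fourierCoeffTwoPi g n =
      (((1 / π) * ∫ x in (0:ℝ)..(2 * π), g x * Real.cos (n * x) : ℝ) -
        ((1 / π) * ∫ x in (0:ℝ)..(2 * π), g x * Real.sin (n * x) : ℝ) * I) / 2 := by
  have hexp (x : ℝ) : fourier (-(n : ℤ)) (x : AddCircle (2 * π - 0)) * (g x : ℂ) =
      ((g x * Real.cos (n * x) : ℝ) : ℂ) - ((g x * Real.sin (n * x) : ℝ) : ℂ) * I := by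
    rw [fourier_coe_apply, sub_zero]
    have : 2 * π * I * ((-(n : ℤ) : ℤ) : ℂ) * x / (2 * π : ℝ) = ((-(n * x) : ℝ) : ℂ) * I := by
      push_cast
      field_simp
    rw [this, exp_mul_I, ← ofReal_cos, ← ofReal_sin, Real.cos_neg, Real.sin_neg]
    push_cast
    ring
  rw [fourierCoeffTwoPi, fourierCoeffOn_eq_integral, real_smul]
  simp_rw [smul_eq_mul, hexp]
  have hint (f : ℝ → ℝ) (hf : Continuous f) :
      IntervalIntegrable (fun x => ((g x * f (n * x) : ℝ) : ℂ)) volume 0 (2 * π) :=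
    have h := hg.mul_continuousOn (hf.comp (continuous_const_mul (n : ℝ))).continuousOn
    ⟨h.1.ofReal, h.2.ofReal⟩
  rw [intervalIntegral.integral_sub (hint _ continuous_cos) ((hint _ continuous_sin).mul_const I),
    intervalIntegral.integral_mul_const, integral_ofReal, integral_ofReal]
  push_cast
  field_simp
  ring

theorem fourierCoeffTwoPi_zero (g : ℝ → ℝ) :
    fourierCoeffTwoPi g 0 = ((2 * π)⁻¹ * ∫ x in (0:ℝ)..(2 * π), g x : ℝ) := by
  simp [fourierCoeffTwoPi, fourierCoeffOn_eq_integral, integral_ofReal]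

theorem norm_fourierCoeffTwoPi_natAbs (g : ℝ → ℝ) (n : ℤ) :
    ‖fourierCoeffTwoPi g n‖ = ‖fourierCoeffTwoPi g n.natAbs‖ := by
  rcases Int.natAbs_eq n with h | h
  · rw [← h]
  · rw [h, fourierCoeffTwoPi, fourierCoeffOn_neg_ofReal, RCLike.norm_conj, fourierCoeffTwoPi, ← h]

theorem fourierCoeffTwoPi_deriv {g : ℝ → ℝ} (hg : ContDiff ℝ 1 g) (hper : g (2 * π) = g 0)
    (n : ℤ) : fourierCoeffTwoPi (deriv g) n = I * n * fourierCoeffTwoPi g n := by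
  rw [fourierCoeffTwoPi, fourierCoeffOn_of_hasDerivAt_of_eq two_pi_pos
    (fun x _ => (hg.differentiable one_ne_zero x).hasDerivAt.ofReal_comp)
    ((continuous_ofReal.comp (hg.continuous_deriv le_rfl)).intervalIntegrable _ _)
    (by simp [hper]), fourierCoeffTwoPi]
  push_cast
  field_simp
  ring

theorem hasSum_sq_norm_fourierCoeffTwoPi {g : ℝ → ℝ} (hg : Continuous g) :
    HasSum (fun n => ‖fourierCoeffTwoPi g n‖ ^ 2)
      ((2 * π)⁻¹ * ∫ x in (0:ℝ)..(2 * π), g x ^ 2) := by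
  simpa [fourierCoeffTwoPi] using hasSum_sq_fourierCoeffOn_ofReal two_pi_pos hg

theorem hasSum_sq_norm_fourierCoeffTwoPi_deriv {g : ℝ → ℝ} (hg : ContDiff ℝ 1 g)
    (hper : Function.Periodic g (2 * π)) :
    HasSum (fun n : ℤ => (n : ℝ) ^ 2 * ‖fourierCoeffTwoPi g n‖ ^ 2)
      ((2 * π)⁻¹ * ∫ x in (0:ℝ)..(2 * π), deriv g x ^ 2) := by
  simpa [fourierCoeffTwoPi_deriv hg (by simpa using hper 0), mul_pow] using
    hasSum_sq_norm_fourierCoeffTwoPi (hg.continuous_deriv le_rfl)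

theorem hasSum_fourierCoeffTwoPi_deficit {g : ℝ → ℝ} (hg : ContDiff ℝ 2 g)
    (hper : Function.Periodic g (2 * π)) :
    HasSum (fun n : ℤ => ((n : ℝ) ^ 2 - 1) * ((n : ℝ) ^ 2 - 9) * ‖fourierCoeffTwoPi g n‖ ^ 2)
      ((2 * π)⁻¹ * ((∫ x in (0:ℝ)..(2 * π), deriv (deriv g) x ^ 2 - deriv g x ^ 2) -
        9 * ∫ x in (0:ℝ)..(2 * π), deriv g x ^ 2 - g x ^ 2)) := by
  have hg' : ContDiff ℝ 1 (deriv g) := hg.deriv'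
  have P0 := hasSum_sq_norm_fourierCoeffTwoPi hg.continuous
  have P1 := hasSum_sq_norm_fourierCoeffTwoPi_deriv (hg.of_le one_le_two) hper
  have P2 := hasSum_sq_norm_fourierCoeffTwoPi_deriv hg' hper.deriv
  simp only [fourierCoeffTwoPi_deriv (hg.of_le one_le_two) (by simpa using hper 0),
    Complex.norm_mul, norm_I, norm_intCast, one_mul, mul_pow, sq_abs] at P2
  have hsq {f : ℝ → ℝ} (hf : Continuous f) :
      IntervalIntegrable (fun x => f x ^ 2) volume 0 (2 * π) :=
    (hf.pow 2).intervalIntegrable _ _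
  rw [intervalIntegral.integral_sub (hsq (hg'.continuous_deriv le_rfl)) (hsq hg'.continuous),
    intervalIntegral.integral_sub (hsq hg'.continuous) (hsq hg.continuous)]
  convert P2.add ((P1.mul_left (-10)).add (P0.mul_left 9)) using 1
  · funext n
    ring
  · ring

theorem sq_sub_one_mul_sq_sub_nine_nonneg_of_odd {n : ℤ} (hn : Odd n) :
    0 ≤ ((n : ℝ) ^ 2 - 1) * ((n : ℝ) ^ 2 - 9) := by
  obtain ⟨k, rfl⟩ := hn
  have key : (0 : ℤ) ≤ ((2 * k + 1) ^ 2 - 1) * ((2 * k + 1) ^ 2 - 9) := by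
    rcases (by omega : k ≤ -2 ∨ k = -1 ∨ k = 0 ∨ 1 ≤ k) with h | rfl | rfl | h
    · nlinarith [mul_nonneg (by linarith : (0:ℤ) ≤ -k - 2) (by linarith : (0:ℤ) ≤ -k - 1)]
    · norm_num
    · norm_num
    · nlinarith [mul_nonneg (by linarith : (0:ℤ) ≤ k - 1) (by linarith : (0:ℤ) ≤ k)]
  exact_mod_cast key

theorem stmt_2 (q : ℝ → ℝ) (hq : ContDiff ℝ 2 q)
    (hper : ∀ x, q (x + 2 * π) = q x)
    (a b : ℕ → ℝ)
    (ha : ∀ n, a n = (1 / π) * ∫ x in (0:ℝ)..(2 * π), q x * Real.cos (n * x))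
    (hb : ∀ n, b n = (1 / π) * ∫ x in (0:ℝ)..(2 * π), q x * Real.sin (n * x))
    (heven : ∀ n, Even n → 2 ≤ n → a n = 0 ∧ b n = 0) :
    (∫ x in (0:ℝ)..(2 * π), (deriv (deriv q) x) ^ 2 - (deriv q x) ^ 2) ≥
      9 * (∫ x in (0:ℝ)..(2 * π), (deriv q x) ^ 2 - (q x) ^ 2) +
        (9 / (2 * π)) * (∫ x in (0:ℝ)..(2 * π), q x) ^ 2 := by
  have hcoeff_even : ∀ n : ℤ, Even n → n ≠ 0 → fourierCoeffTwoPi q n = 0 := by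
    intro n hn hn0
    obtain ⟨han, hbn⟩ := heven n.natAbs (Int.natAbs_even.2 hn) (by obtain ⟨k, rfl⟩ := hn; omega)
    rw [← norm_eq_zero, norm_fourierCoeffTwoPi_natAbs, norm_eq_zero,
      fourierCoeffTwoPi_natCast (hq.continuous.intervalIntegrable _ _), ← ha, ← hb, han, hbn]
    simp
  have hterm_nonneg : ∀ n ≠ (0 : ℤ),
      0 ≤ ((n : ℝ) ^ 2 - 1) * ((n : ℝ) ^ 2 - 9) * ‖fourierCoeffTwoPi q n‖ ^ 2 := by
    intro n hn0
    rcases n.even_or_odd with hn | hn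
    · simp [hcoeff_even n hn hn0]
    · exact mul_nonneg (sq_sub_one_mul_sq_sub_nine_nonneg_of_odd hn) (sq_nonneg _)
  have h0 := le_hasSum (hasSum_fourierCoeffTwoPi_deficit hq hper) 0 hterm_nonneg
  rw [Int.cast_zero, fourierCoeffTwoPi_zero, norm_real, norm_eq_abs, sq_abs] at h0
  have hπ : 0 < 2 * π := two_pi_pos
  field_simp at h0
  rw [ge_iff_le, ← le_sub_iff_add_le', div_mul_eq_mul_div, div_le_iff₀ hπ]
  linarith
end

section
/- Let p be a C², 2π-periodic support function with p + p'' > 0, with origin at the Steiner point (i.e. a₁ = b₁ = 0), Fourier coefficients aₙ, bₙ, cₙ² = aₙ² + bₙ². Then π|F_e| − Δ ≥ (20/9)π² Σ_{n≥3} n² cₙ², and hence π|F_e| − Δ ≥ (20/9)π(∫₀^{2π} p'² dφ − 4π c₂²), where A − F = (1/2)∫₀^{2π} p'² dφ is the difference between the pedal area and the area of K. -/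
open Real intervalIntegral
open Complex MeasureTheory AddCircle Set

noncomputable section

lemma two_pi_pos' : (0:ℝ) < 2 * π := by positivity

lemma fourierCoeffOn_congr_b {f : ℝ → ℂ} {n : ℤ} {b b' : ℝ} (h : b = b')
    (hab : (0:ℝ) < b) (hab' : (0:ℝ) < b') :
    fourierCoeffOn hab f n = fourierCoeffOn hab' f n := by subst h; rfl

lemma parseval_aux (g : ℝ → ℝ) (hg : Continuous g) (hper : ∀ x, g (x + 2*π) = g x) :
    Summable (fun n : ℤ => ‖fourierCoeffOn two_pi_pos' (fun x => (g x : ℂ)) n‖ ^ 2) ∧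
    ∑' n : ℤ, ‖fourierCoeffOn two_pi_pos' (fun x => (g x : ℂ)) n‖ ^ 2
      = (1 / (2 * π)) * ∫ x in (0:ℝ)..(2 * π), (g x) ^ 2 := by
  haveI : Fact ((0:ℝ) < 2 * π) := ⟨two_pi_pos'⟩
  set gc : ℝ → ℂ := fun x => (g x : ℂ) with hgc_def
  have hgc : Continuous gc := Complex.continuous_ofReal.comp hg
  have hG : Continuous (liftIco (2*π) 0 gc) := by
    apply liftIco_continuous
    · exact congrArg Complex.ofReal (hper 0).symm
    · exact hgc.continuousOn
  set G : C(AddCircle (2*π), ℂ) := ⟨_, hG⟩ with hG_def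
  have hcoeff : ∀ n : ℤ, fourierCoeff (G : AddCircle (2*π) → ℂ) n
      = fourierCoeffOn two_pi_pos' gc n := by
    intro n
    rw [show (G : AddCircle (2*π) → ℂ) = liftIco (2*π) 0 gc from rfl,
      fourierCoeff_liftIco_eq]
    exact fourierCoeffOn_congr_b (by ring) _ _
  set f := ContinuousMap.toLp (E := ℂ) 2 haarAddCircle ℂ G with hf_def
  have hcoeff2 : ∀ n : ℤ, fourierCoeff (f : AddCircle (2*π) → ℂ) n
      = fourierCoeffOn two_pi_pos' gc n := by
    intro n; rw [fourierCoeff_toLp]; exact hcoeff n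
  have hsumm : Summable (fun n : ℤ => ‖fourierCoeffOn two_pi_pos' gc n‖ ^ 2) := by
    have h1 : Memℓp (fourierBasis.repr f) 2 := lp.memℓp _
    have h2 : Summable (fun i : ℤ => ‖fourierBasis.repr f i‖ ^ (ENNReal.toReal 2)) :=
      (memℓp_gen_iff (by norm_num)).1 h1
    have h3 : Summable (fun i : ℤ => ‖fourierBasis.repr f i‖ ^ (2:ℕ)) := by
      convert h2 using 2 with i
      rw [show (ENNReal.toReal 2) = ((2:ℕ):ℝ) by norm_num, Real.rpow_natCast]
    simpa only [fourierBasis_repr, hcoeff2] using h3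
  refine ⟨hsumm, ?_⟩
  have hpars := tsum_sq_fourierCoeff f
  simp only [hcoeff2] at hpars
  rw [hpars]
  -- now compute the integral
  have hae : (f : AddCircle (2*π) → ℂ) =ᵐ[haarAddCircle] (G : AddCircle (2*π) → ℂ) :=
    ContinuousMap.coeFn_toLp (𝕜 := ℂ) haarAddCircle G
  have h4 : ∫ t : AddCircle (2*π), ‖f t‖ ^ 2 ∂haarAddCircle
      = ∫ t : AddCircle (2*π), ‖G t‖ ^ 2 ∂haarAddCircle := by
    apply MeasureTheory.integral_congr_ae
    filter_upwards [hae] with t ht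
    rw [ht]
  rw [h4]
  have h5 : ∫ x in (0:ℝ)..(0 + 2*π), ‖G (x : AddCircle (2*π))‖ ^ 2
      = ∫ t : AddCircle (2*π), ‖G t‖ ^ 2 ∂volume :=
    AddCircle.intervalIntegral_preimage (2*π) 0 (fun t => ‖G t‖^2)
  have h6 : (∫ t : AddCircle (2*π), ‖G t‖ ^ 2 ∂volume)
      = (2*π) * ∫ t : AddCircle (2*π), ‖G t‖ ^ 2 ∂haarAddCircle := by
    rw [volume_eq_smul_haarAddCircle, MeasureTheory.integral_smul_measure,
      ENNReal.toReal_ofReal two_pi_pos'.le, smul_eq_mul]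
  have h7 : ∫ x in (0:ℝ)..(0 + 2*π), ‖G (x : AddCircle (2*π))‖ ^ 2
      = ∫ x in (0:ℝ)..(2*π), (g x) ^ 2 := by
    rw [zero_add]
    apply _root_.intervalIntegral.integral_congr_ae
    have hsing : (volume : Measure ℝ) {(2*π)} = 0 := measure_singleton _
    filter_upwards [measure_eq_zero_iff_ae_notMem.mp hsing] with x hx hx2
    rw [Set.uIoc_of_le two_pi_pos'.le] at hx2
    have hxIco : x ∈ Set.Ico (0:ℝ) (0 + 2*π) := by
      rw [zero_add]
      exact ⟨hx2.1.le, lt_of_le_of_ne hx2.2 (by simpa using hx)⟩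
    show ‖liftIco (2*π) 0 gc (x : AddCircle (2*π))‖ ^ 2 = g x ^ 2
    rw [liftIco_coe_apply hxIco]
    simp [hgc_def, Complex.norm_real, _root_.sq_abs]
  rw [← h7, h5, h6]
  have hπ : (2*π) ≠ 0 := two_pi_pos'.ne'
  field_simp
lemma coeff_deriv (p : ℝ → ℝ) (hp : Differentiable ℝ p) (hd : Continuous (deriv p))
    (hper : ∀ x, p (x + 2*π) = p x) (n : ℤ) :
    fourierCoeffOn two_pi_pos' (fun x => ((deriv p x : ℝ) : ℂ)) n
      = Complex.I * n * fourierCoeffOn two_pi_pos' (fun x => (p x : ℂ)) n := by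
  haveI : Fact ((0:ℝ) < 2 * π) := ⟨two_pi_pos'⟩
  have hp2π : p (2*π) = p 0 := by have := hper 0; rwa [zero_add] at this
  rcases eq_or_ne n 0 with rfl | hn
  · simp only [Int.cast_zero, mul_zero, zero_mul]
    rw [fourierCoeffOn_eq_integral]
    have : ∀ x : ℝ, (fourier (-(0:ℤ)) (x : AddCircle (2*π - 0)) : ℂ) = 1 := by
      intro x; simp
    simp only [this, one_smul]
    rw [intervalIntegral.integral_ofReal,
      integral_deriv_eq_sub (fun x _ => hp x) (hd.intervalIntegrable _ _)]
    rw [hp2π]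
    simp
  · have key := fourierCoeffOn_of_hasDerivAt two_pi_pos' hn
      (f := fun x => (p x : ℂ)) (f' := fun x => ((deriv p x : ℝ) : ℂ))
      (fun x _ => ((hp x).hasDerivAt).ofReal_comp)
      ((Complex.continuous_ofReal.comp hd).intervalIntegrable _ _)
    have h0 : ((0:ℝ) : AddCircle (2*π - 0)) = 0 := by norm_cast
    rw [h0, fourier_eval_zero] at key
    simp only [hp2π, sub_self, mul_zero, zero_sub, one_mul, Complex.ofReal_zero, sub_zero] at key
    have hn' : (n:ℂ) ≠ 0 := Int.cast_ne_zero.mpr hn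
    have hπ : (π:ℂ) ≠ 0 := Complex.ofReal_ne_zero.mpr Real.pi_ne_zero
    have hI := Complex.I_ne_zero
    field_simp at key
    have h2 : (2*(π:ℂ)) ≠ 0 := by simp [Real.pi_ne_zero]
    apply mul_left_cancel₀ h2
    push_cast at key; rw [← key]; ring

lemma coeff_re_im (g : ℝ → ℝ) (hg : Continuous g) (m : ℤ) :
    fourierCoeffOn two_pi_pos' (fun x => ((g x : ℝ) : ℂ)) m
      = (((1/(2*π)) * ∫ x in (0:ℝ)..(2*π), g x * Real.cos (m*x) : ℝ) : ℂ)
        - Complex.I * (((1/(2*π)) * ∫ x in (0:ℝ)..(2*π), g x * Real.sin (m*x) : ℝ) : ℂ) := by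
  haveI : Fact ((0:ℝ) < 2 * π) := ⟨two_pi_pos'⟩
  rw [fourierCoeffOn_eq_integral]
  have hf : ∀ x : ℝ, (fourier (-m) (x : AddCircle (2*π - 0)) : ℂ) • ((g x : ℝ) : ℂ)
      = ((g x * Real.cos (m*x) : ℝ) : ℂ) - Complex.I * ((g x * Real.sin (m*x) : ℝ) : ℂ) := by
    intro x
    rw [fourier_coe_apply, smul_eq_mul]
    have harg : 2 * (π:ℂ) * Complex.I * ((-m : ℤ) : ℂ) * (x:ℂ) / ((2*π - 0 : ℝ) : ℂ)
        = ((-(m*x) : ℝ) : ℂ) * Complex.I := by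
      have h2 : ((2*π - 0 : ℝ):ℂ) = 2 * (π:ℂ) := by push_cast; ring
      rw [h2]
      have hπ : (π:ℂ) ≠ 0 := Complex.ofReal_ne_zero.mpr Real.pi_ne_zero
      field_simp
      push_cast
      ring
    rw [harg, Complex.exp_mul_I, ← Complex.ofReal_cos, ← Complex.ofReal_sin,
      Real.cos_neg, Real.sin_neg]
    push_cast
    ring
  simp_rw [hf]
  have hc1 : Continuous (fun x : ℝ => ((g x * Real.cos (m*x) : ℝ) : ℂ)) := by
    apply Complex.continuous_ofReal.comp; fun_prop
  have hc2 : Continuous (fun x : ℝ => ((g x * Real.sin (m*x) : ℝ) : ℂ)) := by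
    apply Complex.continuous_ofReal.comp; fun_prop
  rw [intervalIntegral.integral_sub (g := fun x : ℝ => Complex.I * ((g x * Real.sin (m*x) : ℝ) : ℂ)) (hc1.intervalIntegrable _ _)
      ((continuous_const.mul hc2).intervalIntegrable _ _),
      intervalIntegral.integral_const_mul, intervalIntegral.integral_ofReal,
      intervalIntegral.integral_ofReal]
  have h2 : (2*π - 0) = 2*π := by ring
  rw [h2, Complex.real_smul]
  push_cast
  ring

lemma norm_sq_ofReal_sub_I_mul (r s : ℝ) :
    ‖((r:ℂ) - Complex.I * (s:ℂ))‖^2 = r^2 + s^2 := by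
  rw [Complex.sq_norm, Complex.normSq_apply]
  simp
  ring

lemma tsum_int_natAbs {h : ℕ → ℝ} (hs : Summable (fun n : ℤ => h n.natAbs)) :
    ∑' n : ℤ, h n.natAbs = h 0 + 2 * ∑' k : ℕ, h (k+1) := by
  have e2 : ∀ n : ℕ, ((-((n:ℤ)+1)).natAbs) = n + 1 := by intro n; omega
  have h1 : Summable ((fun n : ℤ => h n.natAbs) ∘ (fun n : ℕ => (n:ℤ))) :=
    hs.comp_injective (fun x y hxy => by omega)
  have h1' : Summable (fun n : ℕ => h n) :=
    h1.congr (fun k => congrArg h (Int.natAbs_natCast k))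
  have h2 : Summable ((fun n : ℤ => h n.natAbs) ∘ (fun n : ℕ => -((n:ℤ)+1))) :=
    hs.comp_injective (fun x y hxy => by omega)
  have h2' : Summable (fun n : ℕ => h (n+1)) :=
    h2.congr (fun k => congrArg h (e2 k))
  rw [tsum_of_nat_of_neg_add_one
    (h1'.congr (fun k => (congrArg h (Int.natAbs_natCast k)).symm))
    (h2'.congr (fun k => (congrArg h (e2 k)).symm))]
  rw [tsum_congr (fun k : ℕ => congrArg h (Int.natAbs_natCast k)),
    tsum_congr (fun k : ℕ => congrArg h (e2 k)), Summable.tsum_eq_zero_add h1']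
  ring

lemma summable_nat_of_int {h : ℕ → ℝ} (hs : Summable (fun n : ℤ => h n.natAbs)) :
    Summable h :=
  (hs.comp_injective (Nat.cast_injective : Function.Injective (fun n : ℕ => (n:ℤ)))).congr
    (fun k => congrArg h (Int.natAbs_natCast k))

lemma tsum_shift1_split (f : ℕ → ℝ) (hf : Summable f) :
    ∑' k : ℕ, f (k+1) = f 1 + f 2 + ∑' k : ℕ, f (k+3) := by
  have h1 : Summable (fun k : ℕ => f (k+1)) := (summable_nat_add_iff 1).2 hf
  have h2 := h1.sum_add_tsum_nat_add 2
  rw [← h2]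
  norm_num [Finset.sum_range_succ]

set_option maxHeartbeats 1600000 in
theorem stmt_7 (p : ℝ → ℝ) (hp : ContDiff ℝ 2 p)
    (hper : ∀ x, p (x + 2 * π) = p x)
    (hconv : ∀ x, 0 < p x + deriv (deriv p) x)
    (a b : ℕ → ℝ)
    (ha : ∀ n, a n = (1 / π) * ∫ x in (0:ℝ)..(2 * π), p x * Real.cos (n * x))
    (hb : ∀ n, b n = (1 / π) * ∫ x in (0:ℝ)..(2 * π), p x * Real.sin (n * x))
    (hsteiner : a 1 = 0 ∧ b 1 = 0)
    (L F Fe Δ : ℝ)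
    (hL : L = ∫ x in (0:ℝ)..(2 * π), p x)
    (hF : F = (1 / 2) * ∫ x in (0:ℝ)..(2 * π), (p x) ^ 2 - (deriv p x) ^ 2)
    (hFe : Fe = (1 / 2) * ∫ x in (0:ℝ)..(2 * π),
      (deriv (deriv p) x) ^ 2 - (deriv p x) ^ 2)
    (hΔ : Δ = L ^ 2 - 4 * π * F) :
    π * Fe - Δ ≥ (20 / 9) * π ^ 2 * ∑' k : ℕ,
      ((k + 3 : ℕ) : ℝ) ^ 2 * (a (k + 3) ^ 2 + b (k + 3) ^ 2) ∧
    π * Fe - Δ ≥ (20 / 9) * π *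
      ((∫ x in (0:ℝ)..(2 * π), (deriv p x) ^ 2) - 4 * π * (a 2 ^ 2 + b 2 ^ 2)) := by
  obtain ⟨ha1, hb1⟩ := hsteiner
  haveI : Fact ((0:ℝ) < 2*π) := ⟨two_pi_pos'⟩
  have hπ := Real.pi_pos
  have hπ0 := Real.pi_ne_zero
  -- regularity
  have hp2 : ContDiff ℝ (1+1) p := by rw [one_add_one_eq_two]; exact hp
  have hdp := contDiff_succ_iff_deriv.mp hp2
  have hp_diff : Differentiable ℝ p := hdp.1
  have hq := contDiff_one_iff_deriv.mp hdp.2.2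
  have hp'_diff : Differentiable ℝ (deriv p) := hq.1
  have hp''_cont : Continuous (deriv (deriv p)) := hq.2
  have hp_cont : Continuous p := hp_diff.continuous
  have hp'_cont : Continuous (deriv p) := hp'_diff.continuous
  -- periodicity of derivatives
  have hper' : ∀ x, deriv p (x + 2*π) = deriv p x := by
    intro x
    rw [← deriv_comp_add_const (f := p) (a := 2*π)]
    congr 1
    funext y
    exact hper y
  have hper'' : ∀ x, deriv (deriv p) (x + 2*π) = deriv (deriv p) x := by
    intro x
    rw [← deriv_comp_add_const (f := deriv p) (a := 2*π)]
    congr 1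
    funext y
    exact hper' y
  -- coefficients
  have hd1 : ∀ n : ℤ, fourierCoeffOn two_pi_pos' (fun x => ((deriv p x : ℝ) : ℂ)) n
      = Complex.I * n * fourierCoeffOn two_pi_pos' (fun x => ((p x : ℝ) : ℂ)) n :=
    coeff_deriv p hp_diff hp'_cont hper
  have hd2 : ∀ n : ℤ, fourierCoeffOn two_pi_pos' (fun x => ((deriv (deriv p) x : ℝ) : ℂ)) n
      = Complex.I * n * fourierCoeffOn two_pi_pos' (fun x => ((deriv p x : ℝ) : ℂ)) n :=
    coeff_deriv (deriv p) hp'_diff hp''_cont hper'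
  set u : ℤ → ℝ := fun n => ‖fourierCoeffOn two_pi_pos' (fun x => ((p x : ℝ) : ℂ)) n‖^2
    with hu_def
  have hIsq : ∀ (n : ℤ) (z : ℂ), ‖Complex.I * (n:ℂ) * z‖^2 = (n:ℝ)^2 * ‖z‖^2 := by
    intro n z
    rw [norm_mul, norm_mul, Complex.norm_I, one_mul, mul_pow]
    congr 1
    have : ((n:ℤ):ℂ) = (((n:ℝ)):ℂ) := by push_cast; rfl
    rw [this, Complex.norm_real, Real.norm_eq_abs, _root_.sq_abs]
  have nsq1 : ∀ n : ℤ, ‖fourierCoeffOn two_pi_pos' (fun x => ((deriv p x : ℝ) : ℂ)) n‖^2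
      = (n:ℝ)^2 * u n := by
    intro n; rw [hd1 n, hIsq]
  have nsq2 : ∀ n : ℤ, ‖fourierCoeffOn two_pi_pos' (fun x => ((deriv (deriv p) x : ℝ) : ℂ)) n‖^2
      = (n:ℝ)^4 * u n := by
    intro n; rw [hd2 n, hIsq, nsq1]; ring
  -- Parseval
  obtain ⟨S0, V0⟩ := parseval_aux p hp_cont hper
  obtain ⟨S1p, V1p⟩ := parseval_aux (deriv p) hp'_cont hper'
  obtain ⟨S2p, V2p⟩ := parseval_aux (deriv (deriv p)) hp''_cont hper''
  have S1 : Summable (fun n : ℤ => (n:ℝ)^2 * u n) := S1p.congr nsq1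
  have S2 : Summable (fun n : ℤ => (n:ℝ)^4 * u n) := S2p.congr nsq2
  have V1 : ∑' n : ℤ, (n:ℝ)^2 * u n
      = (1/(2*π)) * ∫ x in (0:ℝ)..(2*π), (deriv p x)^2 := by
    rw [← V1p]; exact tsum_congr (fun n => (nsq1 n).symm)
  have V2 : ∑' n : ℤ, (n:ℝ)^4 * u n
      = (1/(2*π)) * ∫ x in (0:ℝ)..(2*π), (deriv (deriv p) x)^2 := by
    rw [← V2p]; exact tsum_congr (fun n => (nsq2 n).symm)
  -- coefficient values
  have hint_cos : ∀ n : ℕ, (1/(2*π)) * ∫ x in (0:ℝ)..(2*π), p x * Real.cos (((n:ℤ):ℝ)*x)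
      = a n / 2 := by
    intro n
    have h1 : ∫ x in (0:ℝ)..(2*π), p x * Real.cos (((n:ℤ):ℝ)*x)
        = ∫ x in (0:ℝ)..(2*π), p x * Real.cos ((n:ℝ)*x) := by norm_num
    have h2 : ∫ x in (0:ℝ)..(2*π), p x * Real.cos ((n:ℝ)*x) = π * a n := by
      rw [ha n]; field_simp
    rw [h1, h2]; field_simp
  have hint_sin : ∀ n : ℕ, (1/(2*π)) * ∫ x in (0:ℝ)..(2*π), p x * Real.sin (((n:ℤ):ℝ)*x)
      = b n / 2 := by
    intro n
    have h1 : ∫ x in (0:ℝ)..(2*π), p x * Real.sin (((n:ℤ):ℝ)*x)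
        = ∫ x in (0:ℝ)..(2*π), p x * Real.sin ((n:ℝ)*x) := by norm_num
    have h2 : ∫ x in (0:ℝ)..(2*π), p x * Real.sin ((n:ℝ)*x) = π * b n := by
      rw [hb n]; field_simp
    rw [h1, h2]; field_simp
  have hint_cosneg : ∀ n : ℕ, (1/(2*π)) * ∫ x in (0:ℝ)..(2*π), p x * Real.cos ((((-(n:ℤ)) : ℤ):ℝ)*x)
      = a n / 2 := by
    intro n
    have h1 : ∫ x in (0:ℝ)..(2*π), p x * Real.cos ((((-(n:ℤ)) : ℤ):ℝ)*x)
        = ∫ x in (0:ℝ)..(2*π), p x * Real.cos (((n:ℤ):ℝ)*x) := by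
      apply intervalIntegral.integral_congr
      intro x _
      simp [neg_mul, Real.cos_neg]
    rw [h1]; exact hint_cos n
  have hint_sinneg : ∀ n : ℕ, (1/(2*π)) * ∫ x in (0:ℝ)..(2*π), p x * Real.sin ((((-(n:ℤ)) : ℤ):ℝ)*x)
      = -(b n) / 2 := by
    intro n
    have h1 : ∫ x in (0:ℝ)..(2*π), p x * Real.sin ((((-(n:ℤ)) : ℤ):ℝ)*x)
        = -∫ x in (0:ℝ)..(2*π), p x * Real.sin (((n:ℤ):ℝ)*x) := by
      rw [← intervalIntegral.integral_neg]
      apply intervalIntegral.integral_congr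
      intro x _
      simp [neg_mul, Real.sin_neg]
    rw [h1, mul_neg, hint_sin n]
    ring
  -- u values
  set g : ℕ → ℝ := fun n => (a n^2 + b n^2)/4 with hg_def
  have hu_nat : ∀ n : ℕ, u ((n:ℤ)) = g n := by
    intro n
    show ‖fourierCoeffOn two_pi_pos' (fun x => ((p x : ℝ) : ℂ)) ((n:ℤ))‖^2 = g n
    rw [coeff_re_im p hp_cont ((n:ℤ)), hint_cos n, hint_sin n, norm_sq_ofReal_sub_I_mul]
    rw [hg_def]; ring
  have hu_neg : ∀ n : ℕ, u (-(n:ℤ)) = g n := by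
    intro n
    show ‖fourierCoeffOn two_pi_pos' (fun x => ((p x : ℝ) : ℂ)) (-(n:ℤ))‖^2 = g n
    rw [coeff_re_im p hp_cont (-(n:ℤ))]
    rw [hint_cosneg n, hint_sinneg n, norm_sq_ofReal_sub_I_mul]
    rw [hg_def]; ring
  have hu_abs : ∀ n : ℤ, u n = g n.natAbs := by
    intro n
    rcases n with n | n
    · exact hu_nat n
    · have e : (Int.negSucc n) = -(((n+1:ℕ)):ℤ) := by
        rw [Int.negSucc_eq]; push_cast; ring
      rw [e, hu_neg (n+1)]
      congr 1 <;> omega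
  have gnn : ∀ n, 0 ≤ g n := by intro n; rw [hg_def]; positivity
  -- convert to ℕ sums
  have hZ2 : ∀ n : ℤ, (n:ℝ)^2 * u n
      = (fun m : ℕ => ((m:ℕ):ℝ)^2 * g m) n.natAbs := by
    intro n
    simp only
    rw [Nat.cast_natAbs, Int.cast_abs, _root_.sq_abs, hu_abs]
  have hZ4 : ∀ n : ℤ, (n:ℝ)^4 * u n
      = (fun m : ℕ => ((m:ℕ):ℝ)^4 * g m) n.natAbs := by
    intro n
    simp only
    rw [Nat.cast_natAbs, Int.cast_abs, ← _root_.abs_pow, _root_.abs_of_nonneg (by positivity : (0:ℝ) ≤ ((n:ℤ):ℝ)^4), hu_abs]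
  have E0 : ∑' n : ℤ, u n = g 0 + 2 * ∑' k : ℕ, g (k+1) := by
    rw [tsum_congr hu_abs]
    exact tsum_int_natAbs (h := fun m : ℕ => g m) (S0.congr hu_abs)
  have E1 : ∑' n : ℤ, (n:ℝ)^2 * u n
      = ((0:ℕ):ℝ)^2 * g 0 + 2 * ∑' k : ℕ, (((k+1:ℕ)):ℝ)^2 * g (k+1) := by
    rw [tsum_congr hZ2]
    exact tsum_int_natAbs (h := fun m : ℕ => ((m:ℕ):ℝ)^2 * g m) (S1.congr hZ2)
  have E2 : ∑' n : ℤ, (n:ℝ)^4 * u n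
      = ((0:ℕ):ℝ)^4 * g 0 + 2 * ∑' k : ℕ, (((k+1:ℕ)):ℝ)^4 * g (k+1) := by
    rw [tsum_congr hZ4]
    exact tsum_int_natAbs (h := fun m : ℕ => ((m:ℕ):ℝ)^4 * g m) (S2.congr hZ4)
  -- ℕ summability
  have sg_all : Summable (fun m : ℕ => g m) := summable_nat_of_int (S0.congr hu_abs)
  have s2_all : Summable (fun m : ℕ => ((m:ℕ):ℝ)^2 * g m) :=
    summable_nat_of_int (S1.congr hZ2)
  have s4_all : Summable (fun m : ℕ => ((m:ℕ):ℝ)^4 * g m) :=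
    summable_nat_of_int (S2.congr hZ4)
  have sT0 : Summable (fun k : ℕ => g (k+3)) := (summable_nat_add_iff 3).2 sg_all
  have sT2 : Summable (fun k : ℕ => (((k+3:ℕ)):ℝ)^2 * g (k+3)) :=
    (summable_nat_add_iff 3).2 s2_all
  have sT4 : Summable (fun k : ℕ => (((k+3:ℕ)):ℝ)^4 * g (k+3)) :=
    (summable_nat_add_iff 3).2 s4_all
  set T0 : ℝ := ∑' k : ℕ, g (k+3) with hT0_def
  set T2 : ℝ := ∑' k : ℕ, (((k+3:ℕ)):ℝ)^2 * g (k+3) with hT2_def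
  set T4 : ℝ := ∑' k : ℕ, (((k+3:ℕ)):ℝ)^4 * g (k+3) with hT4_def
  -- splitting
  have sp0 : ∑' k : ℕ, g (k+1) = g 1 + g 2 + T0 :=
    tsum_shift1_split (fun m => g m) sg_all
  have sp2 : ∑' k : ℕ, (((k+1:ℕ)):ℝ)^2 * g (k+1)
      = ((1:ℕ):ℝ)^2 * g 1 + ((2:ℕ):ℝ)^2 * g 2 + T2 :=
    tsum_shift1_split (fun m => ((m:ℕ):ℝ)^2 * g m) s2_all
  have sp4 : ∑' k : ℕ, (((k+1:ℕ)):ℝ)^4 * g (k+1)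
      = ((1:ℕ):ℝ)^4 * g 1 + ((2:ℕ):ℝ)^4 * g 2 + T4 :=
    tsum_shift1_split (fun m => ((m:ℕ):ℝ)^4 * g m) s4_all
  -- integrals
  have hI0 : (∫ x in (0:ℝ)..(2*π), (p x)^2) = 2*π*(g 0 + 2*(g 1 + g 2 + T0)) := by
    have h := V0
    rw [E0, sp0] at h
    field_simp at h
    linarith only [h]
  have hI1 : (∫ x in (0:ℝ)..(2*π), (deriv p x)^2)
      = 2*π*(2*(g 1 + 4 * g 2 + T2)) := by
    have h := V1
    rw [E1, sp2] at h
    norm_num at h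
    field_simp at h
    linarith only [h]
  have hI2 : (∫ x in (0:ℝ)..(2*π), (deriv (deriv p) x)^2)
      = 2*π*(2*(g 1 + 16 * g 2 + T4)) := by
    have h := V2
    rw [E2, sp4] at h
    norm_num at h
    field_simp at h
    linarith only [h]
  -- basic coefficients
  have hL' : L = π * a 0 := by
    rw [hL, ha 0]
    norm_num
  have hb0 : b 0 = 0 := by rw [hb 0]; norm_num
  have hg0 : g 0 = a 0^2/4 := by rw [hg_def]; simp [hb0]
  have hg1 : g 1 = 0 := by rw [hg_def]; simp [ha1, hb1]
  have hg2 : a 2^2 + b 2^2 = 4 * g 2 := by rw [hg_def]; ring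
  -- splitting the F, Fe integrals
  have hF_split : (∫ x in (0:ℝ)..(2*π), ((p x)^2 - (deriv p x)^2))
      = (∫ x in (0:ℝ)..(2*π), (p x)^2) - ∫ x in (0:ℝ)..(2*π), (deriv p x)^2 :=
    intervalIntegral.integral_sub ((hp_cont.pow 2).intervalIntegrable _ _)
      ((hp'_cont.pow 2).intervalIntegrable _ _)
  have hFe_split : (∫ x in (0:ℝ)..(2*π), ((deriv (deriv p) x)^2 - (deriv p x)^2))
      = (∫ x in (0:ℝ)..(2*π), (deriv (deriv p) x)^2)
        - ∫ x in (0:ℝ)..(2*π), (deriv p x)^2 :=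
    intervalIntegral.integral_sub ((hp''_cont.pow 2).intervalIntegrable _ _)
      ((hp'_cont.pow 2).intervalIntegrable _ _)
  -- the key identity
  have hKEY : π * Fe - Δ = π^2 * (2*T4 - 10*T2 + 8*T0) := by
    rw [hFe, hΔ, hF, hL', hFe_split, hF_split, hI0, hI1, hI2, hg1, hg0]
    ring
  -- pointwise comparison
  have hpt : ∀ k : ℕ, (80/9) * ((((k+3:ℕ)):ℝ)^2 * g (k+3))
      ≤ 2*((((k+3:ℕ)):ℝ)^4 * g (k+3)) - 10*((((k+3:ℕ)):ℝ)^2 * g (k+3)) + 8*(g (k+3)) := by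
    intro k
    have hm : (3:ℝ) ≤ (((k+3:ℕ)):ℝ) := by
      push_cast
      linarith only [Nat.cast_nonneg (α := ℝ) k]
    have hg' := gnn (k+3)
    set m : ℝ := (((k+3:ℕ)):ℝ) with hm_def
    have h9 : (0:ℝ) ≤ m^2 - 9 := by nlinarith only [hm]
    have h89 : (0:ℝ) ≤ 2*m^2 - 8/9 := by nlinarith only [hm]
    have key : (0:ℝ) ≤ g (k+3) * ((m^2 - 9) * (2*m^2 - 8/9)) :=
      mul_nonneg hg' (mul_nonneg h9 h89)
    nlinarith only [key]
  have scomb : Summable (fun k : ℕ => 2*((((k+3:ℕ)):ℝ)^4 * g (k+3))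
      - 10*((((k+3:ℕ)):ℝ)^2 * g (k+3)) + 8*(g (k+3))) :=
    ((sT4.mul_left 2).sub (sT2.mul_left 10)).add (sT0.mul_left 8)
  have hcomb : ∑' k : ℕ, (2*((((k+3:ℕ)):ℝ)^4 * g (k+3))
      - 10*((((k+3:ℕ)):ℝ)^2 * g (k+3)) + 8*(g (k+3)))
      = 2*T4 - 10*T2 + 8*T0 :=
    (((sT4.hasSum.mul_left 2).sub (sT2.hasSum.mul_left 10)).add
      (sT0.hasSum.mul_left 8)).tsum_eq
  have hineq : (80/9) * T2 ≤ 2*T4 - 10*T2 + 8*T0 := by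
    rw [← hcomb, ← (sT2.hasSum.mul_left (80/9)).tsum_eq]
    exact (sT2.mul_left (80/9)).tsum_le_tsum hpt scomb
  have hmain : π * Fe - Δ ≥ (80/9) * π^2 * T2 := by
    rw [hKEY]
    have h := mul_le_mul_of_nonneg_left hineq (sq_nonneg π)
    calc (80/9) * π^2 * T2 = π^2 * ((80/9) * T2) := by ring
    _ ≤ π^2 * (2*T4 - 10*T2 + 8*T0) := h
  constructor
  · have hgoal_tsum : ∑' k : ℕ, (((k + 3:ℕ)) : ℝ) ^ 2 * (a (k + 3) ^ 2 + b (k + 3) ^ 2)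
        = 4 * T2 := by
      rw [hT2_def, ← (sT2.hasSum.mul_left 4).tsum_eq]
      apply tsum_congr
      intro k
      rw [hg_def]
      ring
    rw [hgoal_tsum]
    calc (20/9) * π^2 * (4*T2) = (80/9) * π^2 * T2 := by ring
    _ ≤ π * Fe - Δ := hmain
  · rw [hI1, hg2, hg1]
    calc (20/9) * π * (2*π*(2*(0 + 4*g 2 + T2)) - 4*π*(4*g 2))
        = (80/9) * π^2 * T2 := by ring
    _ ≤ π * Fe - Δ := hmain
end
end
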